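/- arXiv:2103.07422 — 2 statements merged into one kernel-verified Lean document; each statement's English description precedes it below -/
import Mathlib

section
/- In a distinguished category, every weakly special subvariety W of a distinguished variety X can be written without taking irreducible components: there exist distinguished morphisms ψ : Z → Y, φ : Z → X and a K-point y of Y such that W = φ(ψ⁻¹(y)) exactly. -/
open Set Function

/-- `T` is an irreducible component of the subset `S` of a topological space:
`T` is a maximal irreducible subset of `S`. -/
def IsIrredComponentOf {α : Type*} [TopologicalSpace α] (T S : Set α) : Prop :=
  Maximal (fun T' => T' ⊆ S ∧ IsIrreducible T') T

/-- The underlying data of a distinguished category over an algebraically closed field `K`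
of characteristic `0`: a class of objects (distinguished varieties), recorded through the
Zariski-topological spaces of `K`-points of their images under the functor to `K`-varieties,
a class of distinguished morphisms, and the dimension function of `K`-varieties. -/
structure DistCatData where
  Obj : Type
  carrier : Obj → Type
  topo : ∀ X, TopologicalSpace (carrier X)
  irr : ∀ X, IrreducibleSpace (carrier X)
  isHom : ∀ (X Y : Obj), (carrier X → carrier Y) → Prop
  dim : ∀ {X : Obj}, Set (carrier X) → ℕ

attribute [instance] DistCatData.topo DistCatData.irr

/-- A distinguished category: the data above satisfying the axioms (A1)-(A4). -/
structure DistCat extends DistCatData where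
  hom_cont : ∀ {X Y : Obj} {f : carrier X → carrier Y}, isHom X Y f → Continuous f
  hom_id : ∀ X, isHom X X id
  hom_comp : ∀ {X Y Z : Obj} {f : carrier X → carrier Y} {g : carrier Y → carrier Z},
    isHom X Y f → isHom Y Z g → isHom X Z (g ∘ f)
  dim_mono : ∀ {X : Obj} {S T : Set (carrier X)}, S ⊆ T → dim S ≤ dim T
  /- (A1) Direct products. -/
  prodObj : Obj → Obj → Obj
  prodEquiv : ∀ X Y, carrier (prodObj X Y) ≃ₜ carrier X × carrier Y
  prod_fst : ∀ X Y, isHom (prodObj X Y) X (fun p => (prodEquiv X Y p).1)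
  prod_snd : ∀ X Y, isHom (prodObj X Y) Y (fun p => (prodEquiv X Y p).2)
  prod_pair : ∀ {W X Y : Obj} {φ : carrier W → carrier X} {ψ : carrier W → carrier Y},
    isHom W X φ → isHom W Y ψ →
    isHom W (prodObj X Y) (fun w => (prodEquiv X Y).symm (φ w, ψ w))
  /- (A2) Fibered products: the (reduced) fibered product of two distinguished morphisms
  is a finite union of images of distinguished morphisms. -/
  fibered : ∀ {X Y Z : Obj} {φ : carrier X → carrier Z} {ψ : carrier Y → carrier Z},
    isHom X Z φ → isHom Y Z ψ →
    ∃ (n : ℕ) (O : Fin n → Obj) (θ : ∀ i, carrier (O i) → carrier (prodObj X Y)),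
      (∀ i, isHom (O i) (prodObj X Y) (θ i)) ∧
      {p : carrier (prodObj X Y) | φ (prodEquiv X Y p).1 = ψ (prodEquiv X Y p).2}
        = ⋃ i, Set.range (θ i)
  /- (A3) Final object, mapped to `Spec K`. -/
  final : Obj
  final_subsingleton : Subsingleton (carrier final)
  final_nonempty : Nonempty (carrier final)
  toFinal : ∀ X, ∃ f, isHom X final f
  /- (A4) Fiber dimension: distinguished morphisms have closed image and factor through a
  finite surjective morphism, a morphism with irreducible non-empty fibers of constant
  dimension, and a morphism with finite fibers. -/
  image_closed : ∀ {X Y : Obj} {f : carrier X → carrier Y}, isHom X Y f →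
    IsClosed (Set.range f)
  factor : ∀ {X Y : Obj} {f : carrier X → carrier Y}, isHom X Y f →
    ∃ (W Z : Obj) (f₁ : carrier W → carrier X) (f₂ : carrier W → carrier Z)
      (f₃ : carrier Z → carrier Y),
      isHom W X f₁ ∧ isHom W Z f₂ ∧ isHom Z Y f₃ ∧ f ∘ f₁ = f₃ ∘ f₂ ∧
      Function.Surjective f₁ ∧ (∀ x, (f₁ ⁻¹' {x}).Finite) ∧ IsClosedMap f₁ ∧
      (∀ y, (f₃ ⁻¹' {y}).Finite) ∧
      (∀ z ∈ Set.range f₂, IsIrreducible (f₂ ⁻¹' {z})) ∧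
      (∃ d₀, ∀ w, dim (f₂ ⁻¹' {f₂ w}) = d₀)

namespace DistCat

variable (C : DistCat)

/-- A subvariety: a closed irreducible subset. -/
def IsSubvariety {X : C.Obj} (S : Set (C.carrier X)) : Prop :=
  IsClosed S ∧ IsIrreducible S

/-- A special subvariety of `X`: the image of a distinguished morphism into `X`. -/
def IsSpecial {X : C.Obj} (S : Set (C.carrier X)) : Prop :=
  ∃ (Y : C.Obj) (φ : C.carrier Y → C.carrier X), C.isHom Y X φ ∧ S = Set.range φ

/-- A weakly special subvariety of `X`: an irreducible component of `φ(ψ⁻¹(y))` for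
distinguished morphisms `ψ : Z → Y`, `φ : Z → X` and a `K`-point `y` of `Y`. -/
def IsWeaklySpecial {X : C.Obj} (W : Set (C.carrier X)) : Prop :=
  ∃ (Z Y : C.Obj) (ψ : C.carrier Z → C.carrier Y) (φ : C.carrier Z → C.carrier X)
    (y : C.carrier Y), C.isHom Z Y ψ ∧ C.isHom Z X φ ∧
      IsIrredComponentOf W (φ '' (ψ ⁻¹' {y}))

/-- `⟨U⟩`: the smallest special subvariety of `X` containing `U` (the intersection of
all special subvarieties containing `U`). -/
def spCl {X : C.Obj} (U : Set (C.carrier X)) : Set (C.carrier X) :=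
  ⋂₀ {S | C.IsSpecial S ∧ U ⊆ S}

/-- `⟨U⟩_ws`: the smallest weakly special subvariety of `X` containing `U`. -/
def wsCl {X : C.Obj} (U : Set (C.carrier X)) : Set (C.carrier X) :=
  ⋂₀ {S | C.IsWeaklySpecial S ∧ U ⊆ S}

/-- The defect `δ(U) = dim ⟨U⟩ - dim U`. -/
def defect {X : C.Obj} (U : Set (C.carrier X)) : ℤ :=
  (C.dim (C.spCl U) : ℤ) - (C.dim U : ℤ)

/-- The weak defect `δ_ws(U) = dim ⟨U⟩_ws - dim U`. -/
def wsDefect {X : C.Obj} (U : Set (C.carrier X)) : ℤ :=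
  (C.dim (C.wsCl U) : ℤ) - (C.dim U : ℤ)

/-- `W` is optimal for `V` in `X`. -/
def IsOptimal {X : C.Obj} (V W : Set (C.carrier X)) : Prop :=
  W ⊆ V ∧ C.IsSubvariety W ∧
    ∀ U, C.IsSubvariety U → W ⊆ U → W ≠ U → U ⊆ V → C.defect W < C.defect U

/-- `W` is weakly optimal for `V` in `X`. -/
def IsWeaklyOptimal {X : C.Obj} (V W : Set (C.carrier X)) : Prop :=
  W ⊆ V ∧ C.IsSubvariety W ∧
    ∀ U, C.IsSubvariety U → W ⊆ U → W ≠ U → U ⊆ V → C.wsDefect W < C.wsDefect U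

/-- `ZP(X, m, d)`: every subvariety of `X` of dimension at most `m` contains at most
finitely many optimal subvarieties of defect at most `d`. -/
def ZP (X : C.Obj) (m d : ℕ) : Prop :=
  ∀ V : Set (C.carrier X), C.IsSubvariety V → C.dim V ≤ m →
    {W : Set (C.carrier X) | C.IsOptimal V W ∧ C.defect W ≤ (d : ℤ)}.Finite

/-- Axiom (A5), weak finiteness: for every subvariety `V` of a distinguished variety `X`
there is a finite set of pairs of distinguished morphisms `φ : Y → X`, `ψ : Y → Z` such
that the weakly special closure of every weakly optimal subvariety for `V` in `X` is an
irreducible component of some `φ(ψ⁻¹(z))` with `φ` having finite fibers. -/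
def WeakFiniteness : Prop :=
  ∀ (X : C.Obj) (V : Set (C.carrier X)), C.IsSubvariety V →
    ∃ (n : ℕ) (Y Z : Fin n → C.Obj)
      (φ : ∀ i, C.carrier (Y i) → C.carrier X)
      (ψ : ∀ i, C.carrier (Y i) → C.carrier (Z i)),
      (∀ i, C.isHom (Y i) X (φ i) ∧ C.isHom (Y i) (Z i) (ψ i)) ∧
      ∀ W, C.IsWeaklyOptimal V W →
        ∃ (i : Fin n) (z : C.carrier (Z i)),
          (∀ x, (φ i ⁻¹' {x}).Finite) ∧
          IsIrredComponentOf (C.wsCl W) (φ i '' (ψ i ⁻¹' {z}))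

/-- `X^{[k]}`: the union of all special subvarieties of `X` of codimension at least `k`. -/
def codimUnion (X : C.Obj) (k : ℕ) : Set (C.carrier X) :=
  ⋃₀ {S | C.IsSpecial S ∧ C.dim S + k ≤ C.dim (Set.univ : Set (C.carrier X))}

/-- Pink's formulation of the Zilber-Pink conjecture for `C`, `m` and `d`: for every
distinguished variety `X` and every subvariety `V ⊆ X` of dimension at most `m`, the
intersection `V ∩ X^{[dim X - min{δ(V)-1, d}]}` is not Zariski dense in `V`. -/
def PinkConj (m d : ℕ) : Prop :=
  ∀ (X : C.Obj) (V : Set (C.carrier X)), C.IsSubvariety V → C.dim V ≤ m →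
    ¬ V ⊆ closure (V ∩
      C.codimUnion X (((C.dim (Set.univ : Set (C.carrier X)) : ℤ)
        - min (C.defect V - 1) (d : ℤ)).toNat))

/-- The local dimension at `x` of the subset `S`: the supremum of the dimensions of the
irreducible components of `S` passing through `x`. -/
noncomputable def locDim {X : C.Obj} (S : Set (C.carrier X)) (x : C.carrier X) : ℕ :=
  sSup {n | ∃ T, IsIrredComponentOf T S ∧ x ∈ T ∧ C.dim T = n}

end DistCat

/-- The image of a fiber of a distinguished morphism under a distinguished morphism
is closed: it is the preimage of the (closed) image of `⟨ψ, φ⟩` under `x ↦ (y, x)`. -/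
theorem fiber_image_isClosed (C : DistCat) {X Y Z : C.Obj}
    {ψ : C.carrier Z → C.carrier Y} {φ : C.carrier Z → C.carrier X}
    (hψ : C.isHom Z Y ψ) (hφ : C.isHom Z X φ) (y : C.carrier Y) :
    IsClosed (φ '' (ψ ⁻¹' {y})) := by
  set e := C.prodEquiv Y X
  have hα : C.isHom Z (C.prodObj Y X) (fun z => e.symm (ψ z, φ z)) :=
    C.prod_pair hψ hφ
  have hcl : IsClosed (Set.range fun z => e.symm (ψ z, φ z)) := C.image_closed hα
  have key : φ '' (ψ ⁻¹' {y})
      = (fun x : C.carrier X => e.symm (y, x)) ⁻¹'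
          (Set.range fun z => e.symm (ψ z, φ z)) := by
    ext x
    constructor
    · rintro ⟨z, hz, rfl⟩
      exact ⟨z, by simp_all⟩
    · rintro ⟨z, hz⟩
      have : (ψ z, φ z) = (y, x) := e.symm.injective hz
      exact ⟨z, by simp [Prod.ext_iff] at this; simp [this]⟩
  rw [key]
  exact hcl.preimage (e.symm.continuous.comp (Continuous.prodMk_right y))

/-- In a distinguished category, every weakly special subvariety `W` of a distinguished
variety `X` can be written without taking irreducible components: there exist
distinguished morphisms `ψ : Z → Y`, `φ : Z → X` and a `K`-point `y` of `Y` such that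
`W = φ(ψ⁻¹(y))` exactly. -/
theorem weakly_special_no_components (C : DistCat) {X : C.Obj}
    {W : Set (C.carrier X)} (hW : C.IsWeaklySpecial W) :
    ∃ (Z Y : C.Obj) (ψ : C.carrier Z → C.carrier Y) (φ : C.carrier Z → C.carrier X)
      (y : C.carrier Y), C.isHom Z Y ψ ∧ C.isHom Z X φ ∧ W = φ '' (ψ ⁻¹' {y}) := by
  obtain ⟨Z, Y, ψ, φ, y, hψ, hφ, hWc⟩ := hW
  obtain ⟨Zt, Z', f₁, f₂, f₃, hf₁, hf₂, hf₃, hcomm, hf₁surj, -, -, hf₃fin, hf₂irr, -⟩ :=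
    C.factor hψ
  -- the fiber decomposes as a finite union over the fiber of `f₃`
  have hfib : ψ ⁻¹' {y} = f₁ '' (f₂ ⁻¹' (f₃ ⁻¹' {y})) := by
    have h1 : f₁ ⁻¹' (ψ ⁻¹' {y}) = f₂ ⁻¹' (f₃ ⁻¹' {y}) := by
      ext w
      simp only [Set.mem_preimage, Set.mem_singleton_iff]
      constructor
      · intro h; rw [← h]; exact (congrFun hcomm w).symm
      · intro h; rw [show ψ (f₁ w) = f₃ (f₂ w) from congrFun hcomm w]; exact h
    rw [← h1, Set.image_preimage_eq _ hf₁surj]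
  set T : C.carrier Z' → Set (C.carrier X) := fun z => (φ ∘ f₁) '' (f₂ ⁻¹' {z}) with hT
  have hS : φ '' (ψ ⁻¹' {y}) = ⋃ z ∈ f₃ ⁻¹' {y}, T z := by
    rw [hfib, ← Set.image_comp]
    ext x
    simp only [Set.mem_image, Set.mem_iUnion, hT, Set.mem_preimage,
      Set.mem_singleton_iff, Function.comp_apply]
    constructor
    · rintro ⟨w, hw, rfl⟩; exact ⟨f₂ w, hw, w, rfl, rfl⟩
    · rintro ⟨z, hz, w, hw, rfl⟩; exact ⟨w, by rw [hw]; exact hz, rfl⟩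
  -- each piece is closed
  have hTcl : ∀ z, IsClosed (T z) :=
    fun z => fiber_image_isClosed C hf₂ (C.hom_comp hf₁ hφ) z
  -- `W` is contained in one of the pieces
  have hWirr : IsIrreducible W := hWc.1.2
  have hWsub : W ⊆ φ '' (ψ ⁻¹' {y}) := hWc.1.1
  have hfin : (f₃ ⁻¹' {y}).Finite := hf₃fin y
  obtain ⟨z₀, hz₀mem, hz₀⟩ : ∃ z ∈ f₃ ⁻¹' {y}, W ⊆ T z := by
    classical
    have hcov : W ⊆ ⋃₀ ↑(hfin.toFinset.image T) := by
      intro x hx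
      obtain ⟨z, hz, hxz⟩ := Set.mem_iUnion₂.1 (hS ▸ hWsub hx)
      exact ⟨T z, by simp only [Finset.coe_image, Set.mem_image, Finset.mem_coe,
        Set.Finite.mem_toFinset]; exact ⟨z, hz, rfl⟩, hxz⟩
    obtain ⟨t, ht, hWt⟩ := (isIrreducible_iff_sUnion_isClosed.1 hWirr)
      (hfin.toFinset.image T)
      (by intro u hu; obtain ⟨z, -, rfl⟩ := Finset.mem_image.1 hu; exact hTcl z) hcov
    obtain ⟨z, hz, rfl⟩ := Finset.mem_image.1 ht
    exact ⟨z, hfin.mem_toFinset.1 hz, hWt⟩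
  -- the piece `T z₀` is irreducible, hence equals `W` by maximality
  obtain ⟨x, hxW⟩ := hWirr.nonempty
  obtain ⟨w, -, rfl⟩ := hz₀ hxW
  have hz₀range : z₀ ∈ Set.range f₂ := by
    obtain ⟨x', hxW'⟩ := hWirr.nonempty
    obtain ⟨w', hw', -⟩ := hz₀ hxW'
    exact ⟨w', hw'⟩
  have hTirr : IsIrreducible (T z₀) :=
    (hf₂irr z₀ hz₀range).image _
      (Continuous.continuousOn ((C.hom_cont hφ).comp (C.hom_cont hf₁)))
  have hTsub : T z₀ ⊆ φ '' (ψ ⁻¹' {y}) := by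
    rw [hS]; exact Set.subset_biUnion_of_mem hz₀mem
  have hTW : T z₀ ⊆ W := hWc.2 ⟨hTsub, hTirr⟩ hz₀
  exact ⟨Zt, Z', f₂, φ ∘ f₁, z₀, hf₂, C.hom_comp hf₁ hφ,
    Set.Subset.antisymm hz₀ hTW⟩
end

section
/- In a distinguished category, every irreducible component of the intersection of two weakly special subvarieties of a distinguished variety X is weakly special, and every irreducible component of the intersection of two special subvarieties of X is special. -/
open Set Function

/-- An irreducible set contained in a finite union of closed sets is contained in one
of them. -/
lemma irred_subset_of_sUnion {α : Type*} [TopologicalSpace α] {T : Set α}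
    {S : Set (Set α)} (hT : IsIrreducible T) (hfin : S.Finite)
    (hcl : ∀ s ∈ S, IsClosed s) (hsub : T ⊆ ⋃₀ S) : ∃ s ∈ S, T ⊆ s := by
  obtain ⟨t, rfl⟩ := hfin.exists_finset_coe
  exact isIrreducible_iff_sUnion_isClosed.mp hT t (fun z hz => hcl z hz) hsub

lemma irred_subset_of_iUnion {α : Type*} [TopologicalSpace α] {n : ℕ} {T : Set α}
    {S : Fin n → Set α} (hT : IsIrreducible T) (hcl : ∀ i, IsClosed (S i))
    (hsub : T ⊆ ⋃ i, S i) : ∃ i, T ⊆ S i := by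
  obtain ⟨s, hs, hTs⟩ := irred_subset_of_sUnion hT (Set.finite_range S)
    (by rintro _ ⟨i, rfl⟩; exact hcl i) (by rwa [Set.sUnion_range])
  obtain ⟨i, rfl⟩ := hs
  exact ⟨i, hTs⟩

namespace DistCat

variable (C : DistCat)

/-- The image of a fiber of a distinguished morphism under a distinguished morphism is
closed: slice the (closed) range of the graph morphism `z ↦ (ψ z, φ z)`. -/
lemma fiberImage_closed {Z Y X : C.Obj} {ψ : C.carrier Z → C.carrier Y}
    {φ : C.carrier Z → C.carrier X} (hψ : C.isHom Z Y ψ) (hφ : C.isHom Z X φ)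
    (y : C.carrier Y) : IsClosed (φ '' (ψ ⁻¹' {y})) := by
  have hπ : C.isHom Z (C.prodObj Y X)
      (fun z => (C.prodEquiv Y X).symm (ψ z, φ z)) := C.prod_pair hψ hφ
  have hcl := C.image_closed hπ
  have hR : IsClosed ((C.prodEquiv Y X) ''
      Set.range (fun z => (C.prodEquiv Y X).symm (ψ z, φ z))) :=
    (Homeomorph.isClosedMap _) _ hcl
  have hR' : (C.prodEquiv Y X) ''
      Set.range (fun z => (C.prodEquiv Y X).symm (ψ z, φ z))
      = Set.range (fun z => (ψ z, φ z)) := by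
    rw [← Set.range_comp]
    simp [Function.comp_def]
  rw [hR'] at hR
  have hkey : φ '' (ψ ⁻¹' {y})
      = (fun x => ((y, x) : C.carrier Y × C.carrier X)) ⁻¹'
        Set.range (fun z => (ψ z, φ z)) := by
    ext x
    constructor
    · rintro ⟨z, hz, rfl⟩
      exact ⟨z, by simp [show ψ z = y from hz]⟩
    · rintro ⟨z, hz⟩
      have h1 : ψ z = y := congrArg Prod.fst hz
      have h2 : φ z = x := congrArg Prod.snd hz
      exact ⟨z, h1, h2⟩
  rw [hkey]
  exact hR.preimage (Continuous.prodMk_right y)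

/-- Every weakly special subvariety is exactly the image of a fiber of a distinguished
morphism under a distinguished morphism. -/
lemma weaklySpecial_rep {X : C.Obj} {W : Set (C.carrier X)}
    (hW : C.IsWeaklySpecial W) :
    ∃ (Z Y : C.Obj) (ψ : C.carrier Z → C.carrier Y) (φ : C.carrier Z → C.carrier X)
      (y : C.carrier Y), C.isHom Z Y ψ ∧ C.isHom Z X φ ∧ W = φ '' (ψ ⁻¹' {y}) := by
  obtain ⟨Z, Y, ψ, φ, y, hψ, hφ, hcomp⟩ := hW
  obtain ⟨V, Z', f₁, f₂, f₃, hf₁, hf₂, hf₃, hfac, hsurj, -, -, hfin3, hirr, -⟩ :=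
    C.factor hψ
  have hfac' : ∀ v, ψ (f₁ v) = f₃ (f₂ v) := fun v => congrFun hfac v
  -- the decomposition of `φ '' (ψ ⁻¹' {y})` into finitely many closed pieces
  set Cz : C.carrier Z' → Set (C.carrier X) := fun z => (φ ∘ f₁) '' (f₂ ⁻¹' {z}) with hCz
  have hGdec : φ '' (ψ ⁻¹' {y}) = ⋃₀ (Cz '' (f₃ ⁻¹' {y})) := by
    ext x
    simp only [Set.mem_sUnion, Set.mem_image, Set.mem_preimage, Set.mem_singleton_iff,
      hCz, Function.comp_apply, exists_exists_and_eq_and]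
    constructor
    · rintro ⟨z, hz, rfl⟩
      obtain ⟨v, rfl⟩ := hsurj z
      exact ⟨f₂ v, by rw [← hfac']; exact hz, v, rfl, rfl⟩
    · rintro ⟨z', hz', v, hv, rfl⟩
      exact ⟨f₁ v, by rw [hfac', hv, hz'], rfl⟩
  have hWirr : IsIrreducible W := hcomp.prop.2
  have hWsub : W ⊆ ⋃₀ (Cz '' (f₃ ⁻¹' {y})) := hGdec ▸ hcomp.prop.1
  have hclosed : ∀ s ∈ Cz '' (f₃ ⁻¹' {y}), IsClosed s := by
    rintro _ ⟨z', -, rfl⟩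
    exact C.fiberImage_closed hf₂ (C.hom_comp hf₁ hφ) z'
  obtain ⟨s, hs, hWs⟩ := irred_subset_of_sUnion hWirr
    (((hfin3 y).image Cz)) hclosed hWsub
  obtain ⟨z', hz', rfl⟩ := hs
  -- the piece is irreducible (it is nonempty since it contains `W`)
  have hz'range : z' ∈ Set.range f₂ := by
    obtain ⟨x, hx⟩ := hWirr.nonempty
    obtain ⟨v, hv, -⟩ := hWs hx
    exact ⟨v, hv⟩
  have hsirr : IsIrreducible (Cz z') :=
    (hirr z' hz'range).image _ (C.hom_cont (C.hom_comp hf₁ hφ)).continuousOn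
  have hssub : Cz z' ⊆ φ '' (ψ ⁻¹' {y}) := by
    rw [hGdec]
    exact Set.subset_sUnion_of_mem ⟨z', hz', rfl⟩
  have : Cz z' ⊆ W := hcomp.2 ⟨hssub, hsirr⟩ hWs
  exact ⟨V, Z', f₂, φ ∘ f₁, z', hf₂, C.hom_comp hf₁ hφ,
    (subset_antisymm hWs this).trans rfl⟩

end DistCat

/-- In a distinguished category, every irreducible component of the intersection of two
weakly special subvarieties of a distinguished variety `X` is weakly special, and every
irreducible component of the intersection of two special subvarieties of `X` is
special. -/
theorem component_of_intersection_special (C : DistCat) {X : C.Obj}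
    (W₁ W₂ T : Set (C.carrier X)) :
    (C.IsWeaklySpecial W₁ → C.IsWeaklySpecial W₂ →
      IsIrredComponentOf T (W₁ ∩ W₂) → C.IsWeaklySpecial T) ∧
    (C.IsSpecial W₁ → C.IsSpecial W₂ →
      IsIrredComponentOf T (W₁ ∩ W₂) → C.IsSpecial T) := by
  constructor
  · -- weakly special case
    intro h1 h2 hT
    obtain ⟨U₁, V₁, ψ₁, φ₁, z₁, hψ₁, hφ₁, hW₁⟩ := C.weaklySpecial_rep h1
    obtain ⟨U₂, V₂, ψ₂, φ₂, z₂, hψ₂, hφ₂, hW₂⟩ := C.weaklySpecial_rep h2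
    obtain ⟨n, O, θ, hθ, hset⟩ := C.fibered hφ₁ hφ₂
    set E := C.prodEquiv U₁ U₂ with hE
    set F := C.prodEquiv V₁ V₂ with hF
    set Φ : ∀ i, C.carrier (O i) → C.carrier X :=
      fun i o => φ₁ (E (θ i o)).1 with hΦdef
    set Ψ : ∀ i, C.carrier (O i) → C.carrier (C.prodObj V₁ V₂) :=
      fun i o => F.symm (ψ₁ (E (θ i o)).1, ψ₂ (E (θ i o)).2) with hΨdef
    set y : C.carrier (C.prodObj V₁ V₂) := F.symm (z₁, z₂) with hy
    have hΦ : ∀ i, C.isHom (O i) X (Φ i) := fun i =>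
      C.hom_comp (C.hom_comp (hθ i) (C.prod_fst U₁ U₂)) hφ₁
    have hΨ : ∀ i, C.isHom (O i) (C.prodObj V₁ V₂) (Ψ i) := fun i =>
      C.prod_pair (C.hom_comp (C.hom_comp (hθ i) (C.prod_fst U₁ U₂)) hψ₁)
        (C.hom_comp (C.hom_comp (hθ i) (C.prod_snd U₁ U₂)) hψ₂)
    have hUnion : W₁ ∩ W₂ = ⋃ i, Φ i '' (Ψ i ⁻¹' {y}) := by
      ext x
      constructor
      · rintro ⟨hx1, hx2⟩
        rw [hW₁] at hx1
        rw [hW₂] at hx2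
        obtain ⟨u₁, hu₁, hxu₁⟩ := hx1
        obtain ⟨u₂, hu₂, hxu₂⟩ := hx2
        have hp : E.symm (u₁, u₂) ∈
            {p : C.carrier (C.prodObj U₁ U₂) |
              φ₁ (C.prodEquiv U₁ U₂ p).1 = φ₂ (C.prodEquiv U₁ U₂ p).2} := by
          show φ₁ (E (E.symm (u₁, u₂))).1 = φ₂ (E (E.symm (u₁, u₂))).2
          rw [E.apply_symm_apply]
          rw [hxu₁, hxu₂]
        rw [hset] at hp
        obtain ⟨_, ⟨i, rfl⟩, o, ho⟩ := hp
        have hEθ : E (θ i o) = (u₁, u₂) := by rw [ho, E.apply_symm_apply]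
        refine Set.mem_iUnion.mpr ⟨i, o, ?_, ?_⟩
        · show Ψ i o = y
          have : Ψ i o = F.symm (ψ₁ u₁, ψ₂ u₂) := by
            rw [hΨdef]
            simp only [hEθ]
          rw [this, hy,
            show ψ₁ u₁ = z₁ from hu₁, show ψ₂ u₂ = z₂ from hu₂]
        · show Φ i o = x
          rw [hΦdef]
          simp only [hEθ]
          exact hxu₁
      · intro hx
        obtain ⟨i, o, ho, rfl⟩ := Set.mem_iUnion.mp hx
        have hmem : θ i o ∈
            {p : C.carrier (C.prodObj U₁ U₂) |
              φ₁ (C.prodEquiv U₁ U₂ p).1 = φ₂ (C.prodEquiv U₁ U₂ p).2} := by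
          rw [hset]
          exact Set.mem_iUnion.mpr ⟨i, o, rfl⟩
        have hpair : (ψ₁ (E (θ i o)).1, ψ₂ (E (θ i o)).2) = (z₁, z₂) :=
          F.symm.injective ho
        have h1' : ψ₁ (E (θ i o)).1 = z₁ := congrArg Prod.fst hpair
        have h2' : ψ₂ (E (θ i o)).2 = z₂ := congrArg Prod.snd hpair
        constructor
        · rw [hW₁]
          exact ⟨(E (θ i o)).1, h1', rfl⟩
        · rw [hW₂]
          exact ⟨(E (θ i o)).2, h2', hmem.symm⟩
    obtain ⟨i, hTi⟩ := irred_subset_of_iUnion hT.prop.2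
      (fun i => C.fiberImage_closed (hΨ i) (hΦ i) y) (hUnion ▸ hT.prop.1)
    have hGsub : Φ i '' (Ψ i ⁻¹' {y}) ⊆ W₁ ∩ W₂ := by
      rw [hUnion]
      exact Set.subset_iUnion (fun i => Φ i '' (Ψ i ⁻¹' {y})) i
    exact ⟨O i, C.prodObj V₁ V₂, Ψ i, Φ i, y, hΨ i, hΦ i,
      ⟨⟨hTi, hT.prop.2⟩, fun T' hT' hsub => hT.2 ⟨hT'.1.trans hGsub, hT'.2⟩ hsub⟩⟩
  · -- special case
    intro h1 h2 hT
    obtain ⟨U₁, φ₁, hφ₁, hW₁⟩ := h1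
    obtain ⟨U₂, φ₂, hφ₂, hW₂⟩ := h2
    obtain ⟨n, O, θ, hθ, hset⟩ := C.fibered hφ₁ hφ₂
    set E := C.prodEquiv U₁ U₂ with hE
    set Φ : ∀ i, C.carrier (O i) → C.carrier X :=
      fun i o => φ₁ (E (θ i o)).1 with hΦdef
    have hΦ : ∀ i, C.isHom (O i) X (Φ i) := fun i =>
      C.hom_comp (C.hom_comp (hθ i) (C.prod_fst U₁ U₂)) hφ₁
    have hUnion : W₁ ∩ W₂ = ⋃ i, Set.range (Φ i) := by
      ext x
      constructor
      · rintro ⟨hx1, hx2⟩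
        rw [hW₁] at hx1
        rw [hW₂] at hx2
        obtain ⟨u₁, hxu₁⟩ := hx1
        obtain ⟨u₂, hxu₂⟩ := hx2
        have hp : E.symm (u₁, u₂) ∈
            {p : C.carrier (C.prodObj U₁ U₂) |
              φ₁ (C.prodEquiv U₁ U₂ p).1 = φ₂ (C.prodEquiv U₁ U₂ p).2} := by
          show φ₁ (E (E.symm (u₁, u₂))).1 = φ₂ (E (E.symm (u₁, u₂))).2
          rw [E.apply_symm_apply]
          rw [hxu₁, hxu₂]
        rw [hset] at hp
        obtain ⟨_, ⟨i, rfl⟩, o, ho⟩ := hp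
        have hEθ : E (θ i o) = (u₁, u₂) := by rw [ho, E.apply_symm_apply]
        refine Set.mem_iUnion.mpr ⟨i, o, ?_⟩
        show Φ i o = x
        rw [hΦdef]
        simp only [hEθ]
        exact hxu₁
      · intro hx
        obtain ⟨i, o, rfl⟩ := Set.mem_iUnion.mp hx
        have hmem : θ i o ∈
            {p : C.carrier (C.prodObj U₁ U₂) |
              φ₁ (C.prodEquiv U₁ U₂ p).1 = φ₂ (C.prodEquiv U₁ U₂ p).2} := by
          rw [hset]
          exact Set.mem_iUnion.mpr ⟨i, o, rfl⟩
        constructor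
        · rw [hW₁]
          exact ⟨(E (θ i o)).1, rfl⟩
        · rw [hW₂]
          exact ⟨(E (θ i o)).2, hmem.symm⟩
    obtain ⟨i, hTi⟩ := irred_subset_of_iUnion hT.prop.2
      (fun i => C.image_closed (hΦ i)) (hUnion ▸ hT.prop.1)
    have hGsub : Set.range (Φ i) ⊆ W₁ ∩ W₂ := by
      rw [hUnion]
      exact Set.subset_iUnion (fun i => Set.range (Φ i)) i
    have hirr : IsIrreducible (Set.range (Φ i)) := by
      rw [← Set.image_univ]
      exact (IrreducibleSpace.isIrreducible_univ (C.carrier (O i))).image _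
        (C.hom_cont (hΦ i)).continuousOn
    have hback : Set.range (Φ i) ⊆ T := hT.2 ⟨hGsub, hirr⟩ hTi
    exact ⟨O i, Φ i, hΦ i, subset_antisymm hTi hback⟩
end
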